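/- The graph Γ_q is (q+1)-regular: every vertex of V_0 and every vertex of V_1 has exactly q+1 neighbors. -/
import Mathlib


/-- One side of the bipartition of `Γ_q`: ordinary vertices `(a,b,c)` with
`a ∈ F ∪ {q}` (encoded as `Option F`, `none` being the extra symbol `q`) and
`b, c ∈ F`, together with the special vertices `(q,q,a)` with `a ∈ F ∪ {q}`. -/
abbrev SGam (F : Type*) := (Option F × F × F) ⊕ Option F

/-- The incidence relation of `Γ_q`: `lineAdj l p` says the line `l ∈ V₁` is
incident with the point `p ∈ V₀`, following the explicit formula of Definition 1. -/
def lineAdj {F : Type*} [Field F] : SGam F → SGam F → Prop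
  | Sum.inl (some a, b, c), Sum.inl (some x, y, z) =>
      y = a * x + b ∧ z = a ^ 2 * x + 2 * a * b + c
  | Sum.inl (some a, _, c), Sum.inl (none, y, z) => y = a ∧ z = c
  | Sum.inl (none, b, c), Sum.inl (some x, y, _) => x = c ∧ y = b
  | Sum.inl (none, _, c), Sum.inr (some z) => z = c
  | Sum.inr (some a), Sum.inl (none, y, _) => y = a
  | Sum.inr (some _), Sum.inr none => True
  | Sum.inr none, Sum.inr _ => True
  | _, _ => False

/-- The bipartite graph `Γ_q`: `Sum.inl` is the point side `V₀`, `Sum.inr` is the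
line side `V₁`, and a point is adjacent to a line iff they are incident. -/
def GammaQ (F : Type*) [Field F] : SimpleGraph (SGam F ⊕ SGam F) :=
  SimpleGraph.fromRel (fun u v =>
    match u, v with
    | Sum.inl p, Sum.inr l => lineAdj l p
    | _, _ => False)

/-- The point `(a,b,c)₀`, `a ∈ F ∪ {q}`. -/
def pt {F : Type*} (a : Option F) (b c : F) : SGam F ⊕ SGam F := Sum.inl (Sum.inl (a, b, c))
/-- The point `(q,q,a)₀`, `a ∈ F ∪ {q}`. -/
def ptq {F : Type*} (a : Option F) : SGam F ⊕ SGam F := Sum.inl (Sum.inr a)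
/-- The line `(a,b,c)₁`, `a ∈ F ∪ {q}`. -/
def ln {F : Type*} (a : Option F) (b c : F) : SGam F ⊕ SGam F := Sum.inr (Sum.inl (a, b, c))
/-- The line `(q,q,a)₁`, `a ∈ F ∪ {q}`. -/
def lnq {F : Type*} (a : Option F) : SGam F ⊕ SGam F := Sum.inr (Sum.inr a)

lemma aux_ncard {F : Type*} [Fintype F] {V : Type*} (f : Option F → V)
    (hf : Function.Injective f) : (Set.range f).ncard = Fintype.card F + 1 := by
  rw [← Nat.card_coe_set_eq, Nat.card_range_of_injective hf,
    Nat.card_eq_fintype_card, Fintype.card_option]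

/-- `Γ_q` is `(q+1)`-regular: every vertex has exactly `q+1` neighbours. -/
theorem stmt10 {F : Type*} [Field F] [Fintype F] :
    ∀ v : SGam F ⊕ SGam F,
      ((GammaQ F).neighborSet v).ncard = Fintype.card F + 1 := by
  rintro (⟨⟨-|x,y,z⟩|⟨-|z⟩⟩|⟨⟨-|a,b,c⟩|⟨-|a⟩⟩)
  · -- point (q, y, z)₀
    show (((GammaQ F).neighborSet (pt none y z)).ncard = Fintype.card F + 1)
    rw [show (GammaQ F).neighborSet (pt none y z) = Set.range (fun o : Option F =>
        o.elim (lnq (some y)) (fun b => ln (some y) b z)) by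
      ext u
      obtain (⟨⟨-|a,b,c⟩|⟨-|a⟩⟩|⟨⟨-|a,b,c⟩|⟨-|a⟩⟩) := u <;>
        simp only [SimpleGraph.mem_neighborSet, GammaQ, SimpleGraph.fromRel_adj, lineAdj,
          pt, ln, lnq, ptq, Set.mem_range, Option.exists, Option.elim, ne_eq,
          Sum.inl.injEq, Sum.inr.injEq, Prod.mk.injEq, Option.some.injEq,
          reduceCtorEq, false_and, and_false, false_or, or_false, exists_eq,
          not_false_eq_true, true_and, and_true, exists_const, iff_true, iff_false,
          exists_eq_left, exists_eq_right, exists_false, or_self] <;>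
        tauto]
    exact aux_ncard _ (by intro o1 o2 h; cases o1 <;> cases o2 <;> simp_all [ln, lnq])
  · -- point (x, y, z)₀
    show (((GammaQ F).neighborSet (pt (some x) y z)).ncard = Fintype.card F + 1)
    rw [show (GammaQ F).neighborSet (pt (some x) y z) = Set.range (fun o : Option F =>
        o.elim (ln none y x) (fun a => ln (some a) (y - a*x) (z - a^2*x - 2*a*(y - a*x)))) by
      ext u
      obtain (⟨⟨-|a,b,c⟩|⟨-|a⟩⟩|⟨⟨-|a,b,c⟩|⟨-|a⟩⟩) := u <;>
        simp only [SimpleGraph.mem_neighborSet, GammaQ, SimpleGraph.fromRel_adj, lineAdj,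
          pt, ln, lnq, ptq, Set.mem_range, Option.exists, Option.elim, ne_eq,
          Sum.inl.injEq, Sum.inr.injEq, Prod.mk.injEq, Option.some.injEq,
          reduceCtorEq, false_and, and_false, false_or, or_false, exists_eq,
          not_false_eq_true, true_and, and_true, exists_const, iff_true, iff_false,
          exists_eq_left, exists_eq_right, exists_false, or_self] <;>
        first
        | tauto
        | (constructor <;> rintro ⟨rfl, rfl⟩ <;> constructor <;> ring)]
    exact aux_ncard _ (by intro o1 o2 h; cases o1 <;> cases o2 <;> simp_all [ln])
  · -- point (q, q, q)₀
    show (((GammaQ F).neighborSet (ptq none)).ncard = Fintype.card F + 1)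
    rw [show (GammaQ F).neighborSet (ptq none) = Set.range (fun o : Option F => lnq o) by
      ext u
      obtain (⟨⟨-|a,b,c⟩|⟨-|a⟩⟩|⟨⟨-|a,b,c⟩|⟨-|a⟩⟩) := u <;>
        simp only [SimpleGraph.mem_neighborSet, GammaQ, SimpleGraph.fromRel_adj, lineAdj,
          pt, ln, lnq, ptq, Set.mem_range, Option.exists, Option.elim, ne_eq,
          Sum.inl.injEq, Sum.inr.injEq, Prod.mk.injEq, Option.some.injEq,
          reduceCtorEq, false_and, and_false, false_or, or_false, exists_eq,
          not_false_eq_true, true_and, and_true, exists_const, iff_true, iff_false,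
          exists_eq_left, exists_eq_right, exists_false, or_self] <;>
        tauto]
    exact aux_ncard _ (by intro o1 o2 h; simp_all [lnq])
  · -- point (q, q, z)₀
    show (((GammaQ F).neighborSet (ptq (some z))).ncard = Fintype.card F + 1)
    rw [show (GammaQ F).neighborSet (ptq (some z)) = Set.range (fun o : Option F =>
        o.elim (lnq none) (fun b => ln none b z)) by
      ext u
      obtain (⟨⟨-|a,b,c⟩|⟨-|a⟩⟩|⟨⟨-|a,b,c⟩|⟨-|a⟩⟩) := u <;>
        simp only [SimpleGraph.mem_neighborSet, GammaQ, SimpleGraph.fromRel_adj, lineAdj,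
          pt, ln, lnq, ptq, Set.mem_range, Option.exists, Option.elim, ne_eq,
          Sum.inl.injEq, Sum.inr.injEq, Prod.mk.injEq, Option.some.injEq,
          reduceCtorEq, false_and, and_false, false_or, or_false, exists_eq,
          not_false_eq_true, true_and, and_true, exists_const, iff_true, iff_false,
          exists_eq_left, exists_eq_right, exists_false, or_self] <;>
        tauto]
    exact aux_ncard _ (by intro o1 o2 h; cases o1 <;> cases o2 <;> simp_all [ln, lnq])
  · -- line (q, b, c)₁
    show (((GammaQ F).neighborSet (ln none b c)).ncard = Fintype.card F + 1)
    rw [show (GammaQ F).neighborSet (ln none b c) = Set.range (fun o : Option F =>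
        o.elim (ptq (some c)) (fun zz => pt (some c) b zz)) by
      ext u
      obtain (⟨⟨-|x,y,z⟩|⟨-|x⟩⟩|⟨⟨-|x,y,z⟩|⟨-|x⟩⟩) := u <;>
        simp only [SimpleGraph.mem_neighborSet, GammaQ, SimpleGraph.fromRel_adj, lineAdj,
          pt, ln, lnq, ptq, Set.mem_range, Option.exists, Option.elim, ne_eq,
          Sum.inl.injEq, Sum.inr.injEq, Prod.mk.injEq, Option.some.injEq,
          reduceCtorEq, false_and, and_false, false_or, or_false, exists_eq,
          not_false_eq_true, true_and, and_true, exists_const, iff_true, iff_false,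
          exists_eq_left, exists_eq_right, exists_false, or_self] <;>
        tauto]
    exact aux_ncard _ (by intro o1 o2 h; cases o1 <;> cases o2 <;> simp_all [pt, ptq])
  · -- line (a, b, c)₁
    show (((GammaQ F).neighborSet (ln (some a) b c)).ncard = Fintype.card F + 1)
    rw [show (GammaQ F).neighborSet (ln (some a) b c) = Set.range (fun o : Option F =>
        o.elim (pt none a c) (fun x => pt (some x) (a*x+b) (a^2*x+2*a*b+c))) by
      ext u
      obtain (⟨⟨-|x,y,z⟩|⟨-|x⟩⟩|⟨⟨-|x,y,z⟩|⟨-|x⟩⟩) := u <;>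
        simp only [SimpleGraph.mem_neighborSet, GammaQ, SimpleGraph.fromRel_adj, lineAdj,
          pt, ln, lnq, ptq, Set.mem_range, Option.exists, Option.elim, ne_eq,
          Sum.inl.injEq, Sum.inr.injEq, Prod.mk.injEq, Option.some.injEq,
          reduceCtorEq, false_and, and_false, false_or, or_false, exists_eq,
          not_false_eq_true, true_and, and_true, exists_const, iff_true, iff_false,
          exists_eq_left, exists_eq_right, exists_false, or_self] <;>
        tauto]
    exact aux_ncard _ (by intro o1 o2 h; cases o1 <;> cases o2 <;> simp_all [pt, ptq])
  · -- line (q, q, q)₁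
    show (((GammaQ F).neighborSet (lnq none)).ncard = Fintype.card F + 1)
    rw [show (GammaQ F).neighborSet (lnq none) = Set.range (fun o : Option F => ptq o) by
      ext u
      obtain (⟨⟨-|x,y,z⟩|⟨-|x⟩⟩|⟨⟨-|x,y,z⟩|⟨-|x⟩⟩) := u <;>
        simp only [SimpleGraph.mem_neighborSet, GammaQ, SimpleGraph.fromRel_adj, lineAdj,
          pt, ln, lnq, ptq, Set.mem_range, Option.exists, Option.elim, ne_eq,
          Sum.inl.injEq, Sum.inr.injEq, Prod.mk.injEq, Option.some.injEq,
          reduceCtorEq, false_and, and_false, false_or, or_false, exists_eq,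
          not_false_eq_true, true_and, and_true, exists_const, iff_true, iff_false,
          exists_eq_left, exists_eq_right, exists_false, or_self] <;>
        tauto]
    exact aux_ncard _ (by intro o1 o2 h; simp_all [ptq])
  · -- line (q, q, a)₁
    show (((GammaQ F).neighborSet (lnq (some a))).ncard = Fintype.card F + 1)
    rw [show (GammaQ F).neighborSet (lnq (some a)) = Set.range (fun o : Option F =>
        o.elim (ptq none) (fun zz => pt none a zz)) by
      ext u
      obtain (⟨⟨-|x,y,z⟩|⟨-|x⟩⟩|⟨⟨-|x,y,z⟩|⟨-|x⟩⟩) := u <;>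
        simp only [SimpleGraph.mem_neighborSet, GammaQ, SimpleGraph.fromRel_adj, lineAdj,
          pt, ln, lnq, ptq, Set.mem_range, Option.exists, Option.elim, ne_eq,
          Sum.inl.injEq, Sum.inr.injEq, Prod.mk.injEq, Option.some.injEq,
          reduceCtorEq, false_and, and_false, false_or, or_false, exists_eq,
          not_false_eq_true, true_and, and_true, exists_const, iff_true, iff_false,
          exists_eq_left, exists_eq_right, exists_false, or_self] <;>
        tauto]
    exact aux_ncard _ (by intro o1 o2 h; cases o1 <;> cases o2 <;> simp_all [pt, ptq])
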